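/- Let A and B be finite alphabets, S a semigroup generated by the images of A under the evaluation p : A⁺ → S, L ⊆ A⁺ a dictionary of S, (α, β) a Nivat bimorphism from B* to A*, and W a deterministic finite automaton with state set Q, initial state q₀ and accepting states F, recognizing H₁ ⊆ B* with {(α(w), β(w)) : w ∈ H₁} = R_ε^L = {(u,v) ∈ L × L : p(u) = p(v)}. Let k = |Q|, and for each q ∈ Q set L(q) = {x ∈ B⁺ : q₀·x = q}·{y ∈ B⁺ : q·y = q, α(y) = ε, |y| ≤ k}·{z ∈ B⁺ : q·z ∈ F} and R(q) = {x ∈ B⁺ : q₀·x = q}·{y ∈ B⁺ : q·y = q, β(y) = ε, |y| ≤ k}·{z ∈ B⁺ : q·z ∈ F}. Then K = L \ ⋃_{q ∈ Q} (β(L(q)) ∪ α(R(q))) satisfies p(K) = S; in particular, every word of L of minimal length among all words of L representing a given element of S belongs to K. -/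
import Mathlib


/-- Extension of a letter map `B → A*` to the induced monoid map `B* → A*`. -/
def strMap {B A : Type} (α : B → List A) (w : List B) : List A :=
  (w.map α).flatten

/-- A Nivat bimorphism: for each letter `b`, exactly one of `α b`, `β b` is the
empty word, and the other is a single letter. -/
def NivatPair {B A : Type} (α β : B → List A) : Prop :=
  ∀ b : B, (α b = [] ∧ (β b).length = 1) ∨ ((α b).length = 1 ∧ β b = [])

/-- Evaluation of a word over `A` in a semigroup `S` (via the one-point
monoid extension `WithOne S`; nonempty words evaluate in `S` itself). -/
def evalW {A S : Type} [Semigroup S] (f : A → S) (w : List A) : WithOne S :=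
  (w.map fun a => (f a : WithOne S)).prod

/-- A relation on words over `A` is rational if it is the image of a regular
language under a Nivat bimorphism. -/
def IsRationalRel {A : Type} (R : Set (List A × List A)) : Prop :=
  ∃ (B : Type) (_ : Fintype B) (H : Language B), H.IsRegular ∧
    ∃ α β : B → List A, NivatPair α β ∧
      R = {uv | ∃ w ∈ H, uv = (strMap α w, strMap β w)}

lemma strMap_append {B A : Type} (α : B → List A) (u v : List B) :
    strMap α (u ++ v) = strMap α u ++ strMap α v := by
  simp [strMap]

/-- Core argument: a word of `L` that is minimal in length among words with the
same evaluation cannot be the `β`-image of an accepted word containing an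
`α`-erasable loop. -/
lemma not_image_of_min {A B S : Type} [Semigroup S] (f : A → S)
    (α β : B → List A) (hN : ∀ b : B, α b = [] → (β b).length = 1)
    {Q : Type} (W : DFA B Q) (L : Language A)
    (hrel : ∀ u : List B, W.eval u ∈ W.accept →
      strMap α u ∈ L ∧ strMap β u ∈ L ∧ evalW f (strMap α u) = evalW f (strMap β u))
    (w : List A)
    (hmin : ∀ w' ∈ L, evalW f w' = evalW f w → w.length ≤ w'.length)
    (q : Q) (x y z : List B) (hy : y ≠ [])
    (hx : W.eval x = q) (hyq : W.evalFrom q y = q) (hαy : strMap α y = [])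
    (hz : W.evalFrom q z ∈ W.accept) :
    strMap β (x ++ y ++ z) ≠ w := by
  intro heq
  have hxyz : W.eval (x ++ y ++ z) ∈ W.accept := by
    rw [DFA.eval, DFA.evalFrom_of_append, DFA.evalFrom_of_append]
    rw [← DFA.eval] at *
    rw [hx, hyq]; exact hz
  have hxz : W.eval (x ++ z) ∈ W.accept := by
    rw [DFA.eval, DFA.evalFrom_of_append, ← DFA.eval, hx]; exact hz
  obtain ⟨_, hβ1, he1⟩ := hrel _ hxyz
  obtain ⟨_, hβ2, he2⟩ := hrel _ hxz
  have hα : strMap α (x ++ y ++ z) = strMap α (x ++ z) := by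
    simp [strMap_append, hαy]
  have heval : evalW f (strMap β (x ++ z)) = evalW f w := by
    rw [← heq, ← he1, hα, he2]
  have hlen := hmin _ hβ2 heval
  -- length contradiction
  obtain ⟨b, t, rfl⟩ := List.exists_cons_of_ne_nil hy
  have hαb : α b = [] := by
    have := hαy
    simp [strMap] at this
    exact this.1
  have hβb : (β b).length = 1 := hN b hαb
  rw [← heq] at hlen
  simp [strMap_append, strMap] at hlen
  omega

/-- Removing from a dictionary `L` the images of accepted
words whose paths contain short circuits erasable by one component of the
Nivat bimorphism still leaves a dictionary: `p(K) = S`, and in particular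
every word of `L` of minimal length representing a given element lies in `K`. -/
theorem stmt7 {A B S : Type} [Fintype A] [Fintype B] [Semigroup S] (f : A → S)
    (hgen : Subsemigroup.closure (Set.range f) = ⊤)
    (L : Language A) (hLreg : L.IsRegular) (hLne : ∀ w ∈ L, w ≠ [])
    (hLdict : ∀ s : S, ∃ w ∈ L, evalW f w = (s : WithOne S))
    (α β : B → List A) (hNivat : NivatPair α β)
    {Q : Type} [Fintype Q] (W : DFA B Q) (H₁ : Language B)
    (hacc : W.accepts = H₁)
    (hrel : {uv : List A × List A | ∃ w ∈ H₁, uv = (strMap α w, strMap β w)} =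
      {uv : List A × List A | uv.1 ∈ L ∧ uv.2 ∈ L ∧ evalW f uv.1 = evalW f uv.2})
    (k : ℕ) (hk : k = Fintype.card Q)
    (Lq Rq : Q → Set (List B))
    (hLq : ∀ q : Q, Lq q = {w | ∃ x y z : List B, x ≠ [] ∧ y ≠ [] ∧ z ≠ [] ∧
      W.eval x = q ∧ W.evalFrom q y = q ∧ strMap α y = [] ∧ y.length ≤ k ∧
      W.evalFrom q z ∈ W.accept ∧ w = x ++ y ++ z})
    (hRq : ∀ q : Q, Rq q = {w | ∃ x y z : List B, x ≠ [] ∧ y ≠ [] ∧ z ≠ [] ∧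
      W.eval x = q ∧ W.evalFrom q y = q ∧ strMap β y = [] ∧ y.length ≤ k ∧
      W.evalFrom q z ∈ W.accept ∧ w = x ++ y ++ z})
    (K : Language A)
    (hK : (K : Set (List A)) =
      (L : Set (List A)) \ ⋃ q : Q, (strMap β '' Lq q ∪ strMap α '' Rq q)) :
    (∀ s : S, ∃ w ∈ K, evalW f w = (s : WithOne S)) ∧
      ∀ s : S, ∀ w ∈ L, evalW f w = (s : WithOne S) →
        (∀ w' ∈ L, evalW f w' = (s : WithOne S) → w.length ≤ w'.length) →
        w ∈ K := by
  have hrel' : ∀ u : List B, W.eval u ∈ W.accept →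
      strMap α u ∈ L ∧ strMap β u ∈ L ∧ evalW f (strMap α u) = evalW f (strMap β u) := by
    intro u hu
    have : (strMap α u, strMap β u) ∈
        {uv : List A × List A | ∃ w ∈ H₁, uv = (strMap α w, strMap β w)} :=
      ⟨u, by rw [← hacc]; exact hu, rfl⟩
    rw [hrel] at this
    exact this
  have hrel'' : ∀ u : List B, W.eval u ∈ W.accept →
      strMap β u ∈ L ∧ strMap α u ∈ L ∧ evalW f (strMap β u) = evalW f (strMap α u) := by
    intro u hu
    obtain ⟨h1, h2, h3⟩ := hrel' u hu
    exact ⟨h2, h1, h3.symm⟩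
  have main : ∀ s : S, ∀ w ∈ L, evalW f w = (s : WithOne S) →
      (∀ w' ∈ L, evalW f w' = (s : WithOne S) → w.length ≤ w'.length) → w ∈ K := by
    intro s w hwL hws hmin
    show w ∈ (K : Set (List A))
    rw [hK]
    refine ⟨hwL, ?_⟩
    intro hmem
    simp only [Set.mem_iUnion, Set.mem_union] at hmem
    have hmin' : ∀ w' ∈ L, evalW f w' = evalW f w → w.length ≤ w'.length := by
      intro w' h1 h2; exact hmin w' h1 (h2.trans hws)
    obtain ⟨q, hq | hq⟩ := hmem
    · obtain ⟨u, hu, hβu⟩ := hq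
      rw [hLq q] at hu
      obtain ⟨x, y, z, _, hy, _, hx, hyq, hαy, _, hz, rfl⟩ := hu
      exact not_image_of_min f α β
        (fun b hb => ((hNivat b).resolve_right (fun ⟨h1, _⟩ => by simp [hb] at h1)).2)
        W L hrel' w hmin' q x y z hy hx hyq hαy hz hβu
    · obtain ⟨u, hu, hαu⟩ := hq
      rw [hRq q] at hu
      obtain ⟨x, y, z, _, hy, _, hx, hyq, hβy, _, hz, rfl⟩ := hu
      exact not_image_of_min f β α
        (fun b hb => ((hNivat b).resolve_left (fun ⟨_, h2⟩ => by simp [hb] at h2)).1)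
        W L hrel'' w hmin' q x y z hy hx hyq hβy hz hαu
  refine ⟨?_, main⟩
  intro s
  classical
  have hne : ∃ n : ℕ, ∃ w ∈ L, w.length = n ∧ evalW f w = (s : WithOne S) := by
    obtain ⟨w, hwL, hws⟩ := hLdict s
    exact ⟨w.length, w, hwL, rfl, hws⟩
  obtain ⟨w, hwL, hlen, hws⟩ := Nat.find_spec hne
  refine ⟨w, main s w hwL hws ?_, hws⟩
  intro w' hw' hws'
  rw [hlen]
  exact Nat.find_le ⟨w', hw', rfl, hws'⟩
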